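/- Assume the setting. Let D = (𝒰₀,…,𝒰_{r−1}) be an s-invariant domain and for z ∈ M set G_D(z) = { t ∈ Δ : f^n(z,t) ∈ 𝒰₀ ∪ ⋯ ∪ 𝒰_{r−1} for some n ≥ 1 } and H_D(z) = Δ \ G_D(z). If z ∈ M satisfies ν^∞(H_D(z)) > 0, then for ν^∞-almost every t ∈ H_D(z) and every w ∈ ω(z,t) one has H_D(w) = Δ, i.e. f^n(w,s) ∉ 𝒰₀ ∪ ⋯ ∪ 𝒰_{r−1} for every n ≥ 1 and every s ∈ Δ. -/

import Mathlib

open MeasureTheory Metric Set Filter Topology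
open scoped ENNReal
set_option linter.unusedSectionVars false
set_option linter.unusedVariables false
set_option maxHeartbeats 1000000

noncomputable section

/-- The parameter space `T`: the closed `ε`-ball around `a` in `ℝⁿ`. -/
abbrev PSpace (n : ℕ) (a : EuclideanSpace ℝ (Fin n)) (ε : ℝ) : Type _ :=
  ↥(Metric.closedBall a ε)

/-- Perturbed iterates: `pIter f k z t = f_{t_k} ∘ ⋯ ∘ f_{t_1} (z)`
(the sequence `t` is indexed from `0` here). -/
def pIter {M T : Type*} (f : M → T → M) : ℕ → M → (ℕ → T) → M
  | 0, z, _ => z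
  | k + 1, z, t => f (pIter f k z t) (t k)

set_option linter.unusedSectionVars false
set_option linter.unusedVariables false
set_option maxHeartbeats 1000000


section basic
variable {M T : Type*} [TopologicalSpace M] [TopologicalSpace T]

lemma pIter_add (f : M → T → M) (N k : ℕ) (z : M) (t : ℕ → T) :
    pIter f (N + k) z t = pIter f k (pIter f N z t) (fun i => t (N + i)) := by
  induction k with
  | zero => rfl
  | succ k ih => show f (pIter f (N + k) z t) _ = f _ _; rw [ih]; simp [Nat.add_eq]

lemma pIter_congr (f : M → T → M) (k : ℕ) (z : M) {t t' : ℕ → T}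
    (h : ∀ i < k, t i = t' i) : pIter f k z t = pIter f k z t' := by
  induction k with
  | zero => rfl
  | succ k ih =>
    show f _ _ = f _ _
    rw [ih (fun i hi => h i (Nat.lt_succ_of_lt hi)), h k (Nat.lt_succ_self k)]

lemma continuous_pIter {f : M → T → M} (hfc : Continuous fun p : M × T => f p.1 p.2) (k : ℕ) :
    Continuous fun p : M × (ℕ → T) => pIter f k p.1 p.2 := by
  induction k with
  | zero => exact continuous_fst
  | succ k ih =>
    exact hfc.comp (ih.prodMk ((continuous_apply k).comp continuous_snd))
end basic

section meas
variable {T : Type*} [TopologicalSpace T] [MeasurableSpace T] [BorelSpace T]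
  [SecondCountableTopology T]

/-- rectangle cylinders -/
def RC (T : Type*) [MeasurableSpace T] : Set (Set (ℕ → T)) :=
  {A | ∃ k : ℕ, ∃ E : ℕ → Set T, (∀ i, MeasurableSet (E i)) ∧ A = {t | ∀ i < k, t i ∈ E i}}

lemma RC_pisystem : IsPiSystem (RC T) := by
  rintro A ⟨k, E, hE, rfl⟩ B ⟨l, F, hF, rfl⟩ -
  refine ⟨max k l, fun i => (if i < k then E i else univ) ∩ (if i < l then F i else univ),
    fun i => by measurability, ?_⟩
  ext t
  simp only [mem_inter_iff, mem_setOf_eq, lt_max_iff]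
  constructor
  · rintro ⟨h1, h2⟩ i _
    constructor
    · split_ifs with h; exacts [h1 i h, mem_univ _]
    · split_ifs with h; exacts [h2 i h, mem_univ _]
  · intro h
    constructor
    · intro i hi; have := (h i (Or.inl hi)).1; rwa [if_pos hi] at this
    · intro i hi; have := (h i (Or.inr hi)).2; rwa [if_pos hi] at this

lemma measurableSet_RC {A : Set (ℕ → T)} (hA : A ∈ RC T) : MeasurableSet A := by
  obtain ⟨k, E, hE, rfl⟩ := hA
  have : {t : ℕ → T | ∀ i < k, t i ∈ E i} = ⋂ i ∈ Finset.range k, (fun t => t i) ⁻¹' E i := by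
    ext t; simp [Finset.mem_range]
  rw [this]
  exact MeasurableSet.biInter (Finset.range k).countable_toSet
    fun i _ => (measurable_pi_apply i) (hE i)

lemma generateFrom_RC : MeasurableSpace.generateFrom (RC T) = MeasurableSpace.pi := by
  apply le_antisymm
  · rw [MeasurableSpace.generateFrom_le_iff]
    intro A hA; exact measurableSet_RC hA
  · refine iSup_le fun i => ?_
    rw [MeasurableSpace.comap_le_iff_le_map]
    intro E hE
    refine MeasurableSpace.measurableSet_generateFrom ?_
    refine ⟨i + 1, fun j => if j = i then E else univ, fun j => ?_, ?_⟩
    · simp only []; split_ifs; exacts [hE, MeasurableSet.univ]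
    · ext t
      simp only [MeasurableSpace.map_def, mem_preimage, mem_setOf_eq]
      constructor
      · intro h j hj
        split_ifs with hji
        · subst hji; exact h
        · exact mem_univ _
      · intro h
        have := h i (Nat.lt_succ_self i)
        rwa [if_pos rfl] at this
end meas

section meas
variable {T : Type*} [TopologicalSpace T] [MeasurableSpace T] [BorelSpace T]
  [SecondCountableTopology T]
  (ν : Measure T) [IsProbabilityMeasure ν]
  (νinf : Measure (ℕ → T)) [IsProbabilityMeasure νinf]

lemma measurable_projFin (N : ℕ) : Measurable (fun (t : ℕ → T) (i : Fin N) => t i) :=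
  measurable_pi_lambda _ fun i => measurable_pi_apply _

lemma meas_cyl (hνinf : ∀ k : ℕ, νinf.map (fun t (i : Fin k) => t i) = Measure.pi fun _ => ν)
    (k : ℕ) (E : ℕ → Set T) (hE : ∀ i, MeasurableSet (E i)) :
    νinf {t | ∀ i < k, t i ∈ E i} = ∏ i ∈ Finset.range k, ν (E i) := by
  have hset : {t : ℕ → T | ∀ i < k, t i ∈ E i}
      = (fun t (i : Fin k) => t i) ⁻¹' (univ.pi fun i : Fin k => E i) := by
    ext t
    simp only [mem_preimage, Set.mem_pi, mem_univ, forall_true_left, mem_setOf_eq]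
    exact ⟨fun h i => h i i.isLt, fun h i hi => h ⟨i, hi⟩⟩
  rw [hset, ← Measure.map_apply (measurable_projFin k)
      (MeasurableSet.univ_pi fun i => hE i), hνinf k, Measure.pi_pi]
  exact Fin.prod_univ_eq_prod_range (fun i => ν (E i)) k
end meas

section split
variable {T : Type*} [TopologicalSpace T] [MeasurableSpace T] [BorelSpace T]
  [SecondCountableTopology T]
  (ν : Measure T) [IsProbabilityMeasure ν]
  (νinf : Measure (ℕ → T)) [IsProbabilityMeasure νinf]

/-- finite rectangles -/
def Rects (T : Type*) [MeasurableSpace T] (N : ℕ) : Set (Set (Fin N → T)) :=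
  {S | ∃ E : Fin N → Set T, (∀ i, MeasurableSet (E i)) ∧ S = univ.pi E}

lemma Rects_pisystem (N : ℕ) : IsPiSystem (Rects T N) := by
  rintro A ⟨E, hE, rfl⟩ B ⟨F, hF, rfl⟩ -
  exact ⟨fun i => E i ∩ F i, fun i => (hE i).inter (hF i), by rw [← Set.pi_inter_distrib]⟩

lemma measurableSet_Rects {N : ℕ} {S : Set (Fin N → T)} (hS : S ∈ Rects T N) :
    MeasurableSet S := by
  obtain ⟨E, hE, rfl⟩ := hS
  exact MeasurableSet.univ_pi hE

lemma generateFrom_Rects (N : ℕ) :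
    MeasurableSpace.generateFrom (Rects T N) = MeasurableSpace.pi := by
  apply le_antisymm
  · rw [MeasurableSpace.generateFrom_le_iff]
    intro A hA; exact measurableSet_Rects hA
  · refine iSup_le fun i => ?_
    rw [MeasurableSpace.comap_le_iff_le_map]
    intro E hE
    refine MeasurableSpace.measurableSet_generateFrom
      ⟨fun j => if j = i then E else univ, fun j => ?_, ?_⟩
    · dsimp only; split_ifs with h
      · subst h; exact hE
      · exact MeasurableSet.univ
    · ext u
      simp only [MeasurableSpace.map_def, mem_preimage, Set.mem_pi, mem_univ, forall_true_left]
      constructor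
      · intro h j
        by_cases hji : j = i
        · subst hji; simpa using h
        · simp [hji]
      · intro h; have := h i; simpa using this
end split

section splitlaw
variable {T : Type*} [TopologicalSpace T] [MeasurableSpace T] [BorelSpace T]
  [SecondCountableTopology T]
  {ν : Measure T} [IsProbabilityMeasure ν]
  {νinf : Measure (ℕ → T)} [IsProbabilityMeasure νinf]

lemma measurable_splitMap (N : ℕ) :
    Measurable (fun t : ℕ → T => ((fun i : Fin N => t i, fun i => t (N + i)) :
      (Fin N → T) × (ℕ → T))) :=
  (measurable_projFin N).prodMk (measurable_pi_lambda _ fun i => measurable_pi_apply _)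

lemma split_law (hνinf : ∀ k : ℕ, νinf.map (fun t (i : Fin k) => t i) = Measure.pi fun _ => ν)
    (N : ℕ) :
    νinf.map (fun t => ((fun i : Fin N => t i, fun i => t (N + i)) :
      (Fin N → T) × (ℕ → T)))
      = (Measure.pi fun _ : Fin N => ν).prod νinf := by
  haveI : IsProbabilityMeasure (νinf.map (fun t : ℕ → T =>
      ((fun i : Fin N => t i, fun i => t (N + i)) : (Fin N → T) × (ℕ → T)))) :=
    Measure.isProbabilityMeasure_map (measurable_splitMap N).aemeasurable
  refine MeasureTheory.ext_of_generate_finite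
    (image2 (· ×ˢ ·) (Rects T N) (RC T)) ?_ ?_ ?_ ?_
  · have h1 : IsCountablySpanning (Rects T N) := by
      refine ⟨fun _ => univ, fun _ => ⟨fun _ => univ, fun _ => MeasurableSet.univ,
        (Set.pi_univ _).symm⟩, iUnion_const _⟩
    have h2 : IsCountablySpanning (RC T) := by
      refine ⟨fun _ => univ, fun _ => ⟨0, fun _ => univ, fun _ => MeasurableSet.univ, ?_⟩,
        iUnion_const _⟩
      ext t; simp
    have := generateFrom_prod_eq (α := Fin N → T) (β := ℕ → T) h1 h2
    rw [generateFrom_Rects, generateFrom_RC] at this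
    exact this
  · exact IsPiSystem.prod (Rects_pisystem N) RC_pisystem
  · rintro - ⟨S, hS, A, hA, rfl⟩
    obtain ⟨E, hE, rfl⟩ := hS
    obtain ⟨k, F, hF, rfl⟩ := hA
    rw [Measure.map_apply (measurable_splitMap N)
      ((measurableSet_Rects ⟨E, hE, rfl⟩).prod (measurableSet_RC ⟨k, F, hF, rfl⟩)),
      Measure.prod_prod, Measure.pi_pi, meas_cyl ν νinf hνinf k F hF]
    have hset : (fun t : ℕ → T => ((fun i : Fin N => t i, fun i => t (N + i)) :
        (Fin N → T) × (ℕ → T))) ⁻¹' ((univ.pi E) ×ˢ {t | ∀ i < k, t i ∈ F i})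
        = {t | ∀ i < N + k, t i ∈ (fun j => if h : j < N then E ⟨j, h⟩ else F (j - N)) i} := by
      ext t
      simp only [mem_preimage, mem_prod, Set.mem_pi, mem_univ, forall_true_left, mem_setOf_eq]
      constructor
      · rintro ⟨h1, h2⟩ i hi
        by_cases h : i < N
        · simpa [h] using h1 ⟨i, h⟩
        · have : i - N < k := by omega
          have h2' := h2 (i - N) this
          have : N + (i - N) = i := by omega
          rw [this] at h2'
          simpa [h] using h2'
      · intro h
        constructor
        · intro i
          have := h i (by omega)
          simpa [i.isLt] using this
        · intro i hi
          have := h (N + i) (by omega)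
          have hlt : ¬ N + i < N := by omega
          simpa [hlt] using this
    rw [hset, meas_cyl ν νinf hνinf (N + k) _
      (fun i => by
        show MeasurableSet (if h : i < N then E ⟨i, h⟩ else F (i - N))
        split_ifs; exacts [hE _, hF _]),
      Finset.prod_range_add]
    congr 1
    · rw [← Fin.prod_univ_eq_prod_range (fun i => ν (if h : i < N then E ⟨i, h⟩ else F (i - N))) N]
      refine Finset.prod_congr rfl fun i _ => ?_
      simp [i.isLt]
    · refine Finset.prod_congr rfl fun i hi => ?_
      have hlt : ¬ N + i < N := by omega
      simp [hlt]
  · simp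
end splitlaw



/-- An s-invariant domain for the randomly perturbed system: a finite tuple of
nonempty open sets with pairwise disjoint closures, permuted cyclically by all
perturbed iterates. -/
structure SInvDomain {M T : Type*} [TopologicalSpace M] (f : M → T → M) where
  r : ℕ
  r_pos : 0 < r
  U : Fin r → Set M
  isOpen : ∀ i, IsOpen (U i)
  nonempty : ∀ i, (U i).Nonempty
  separated : ∀ i j : Fin r, i ≠ j → closure (U i) ∩ closure (U j) = ∅
  invariant : ∀ k : ℕ, 1 ≤ k → ∀ i : Fin r, ∀ z ∈ U i, ∀ t : ℕ → T,
    pIter f k z t ∈ U ⟨((i : ℕ) + k) % r, Nat.mod_lt _ r_pos⟩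

/-- The union `⋃D` of the open sets forming an s-invariant domain. -/
def SInvDomain.carrier {M T : Type*} [TopologicalSpace M] {f : M → T → M}
    (D : SInvDomain f) : Set M := ⋃ i, D.U i

/-- The partial order `D ⪯ D'` on s-invariant domains. -/
def DomLE {M T : Type*} [TopologicalSpace M] {f : M → T → M}
    (D D' : SInvDomain f) : Prop :=
  ∃ i i' : ℕ, ∀ k : ℕ, 1 ≤ k →
    D.U ⟨(i + k) % D.r, Nat.mod_lt _ D.r_pos⟩ ⊆ D'.U ⟨(i' + k) % D'.r, Nat.mod_lt _ D'.r_pos⟩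

/-- Two s-invariant domains coincide up to cyclic shift. -/
def CyclicEq {M T : Type*} [TopologicalSpace M] {f : M → T → M}
    (D D' : SInvDomain f) : Prop :=
  ∃ i i' : ℕ, ∀ k : ℕ, 1 ≤ k →
    D.U ⟨(i + k) % D.r, Nat.mod_lt _ D.r_pos⟩ = D'.U ⟨(i' + k) % D'.r, Nat.mod_lt _ D'.r_pos⟩

/-- A minimal invariant domain. -/
def MinimalDom {M T : Type*} [TopologicalSpace M] {f : M → T → M}
    (D : SInvDomain f) : Prop :=
  ∀ D' : SInvDomain f, DomLE D' D → CyclicEq D' D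

/-- A c-invariant (completely invariant) set. -/
def CInvariant {M T : Type*} (f : M → T → M) (C : Set M) : Prop :=
  ∀ x ∈ C, ∀ t : ℕ → T, ∀ k : ℕ, 1 ≤ k → pIter f k x t ∈ C

/-- The ω-limit of a point under a fixed perturbation vector. -/
def omegaPt {M T : Type*} [TopologicalSpace M] (f : M → T → M) (z : M) (t : ℕ → T) : Set M :=
  {w | ∃ nseq : ℕ → ℕ, StrictMono nseq ∧
    Tendsto (fun j => pIter f (nseq j) z t) atTop (𝓝 w)}

/-- The ω-limit of a set under a fixed perturbation vector. -/
def omegaSet {M T : Type*} [TopologicalSpace M] (f : M → T → M) (U : Set M) (t : ℕ → T) :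
    Set M :=
  {w | ∃ (u : ℕ → M) (nseq : ℕ → ℕ), (∀ j, u j ∈ U) ∧ StrictMono nseq ∧
    Tendsto (fun j => pIter f (nseq j) (u j) t) atTop (𝓝 w)}

/-- The ω-limit of a set under all perturbation vectors. -/
def omegaSetAll {M T : Type*} [TopologicalSpace M] (f : M → T → M) (U : Set M) : Set M :=
  {w | ∃ (u : ℕ → M) (ts : ℕ → ℕ → T) (nseq : ℕ → ℕ), (∀ j, u j ∈ U) ∧ StrictMono nseq ∧
    Tendsto (fun j => pIter f (nseq j) (u j) (ts j)) atTop (𝓝 w)}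

/-- A stationary probability measure for the perturbed system. -/
def Stationary {M T : Type*} [TopologicalSpace M] [MeasurableSpace M] [MeasurableSpace T]
    (f : M → T → M) (ν : Measure T) (μ : Measure M) : Prop :=
  ∀ φ : C(M, ℝ), ∫ z, (∫ t, φ (f z t) ∂ν) ∂μ = ∫ z, φ z ∂μ

/-- The skew product map `S(z,t) = (f_{t₁}(z), σ t)`. -/
def skewProd {M T : Type*} (f : M → T → M) : M × (ℕ → T) → M × (ℕ → T) :=
  fun p => (f p.1 (p.2 0), fun i => p.2 (i + 1))

/-- The support of a measure: points all of whose open neighbourhoods have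
positive measure. -/
def msupport {M : Type*} [TopologicalSpace M] [MeasurableSpace M] (μ : Measure M) : Set M :=
  {x | ∀ O : Set M, IsOpen O → x ∈ O → 0 < μ O}

/-- The ergodic basin `E(μ)` of a stationary measure: points whose time averages along
`ν^∞`-a.e. perturbed orbit converge to the space average of every continuous function. -/
def basin {M T : Type*} [TopologicalSpace M] [MeasurableSpace M] [MeasurableSpace T]
    (f : M → T → M) (νinf : Measure (ℕ → T)) (μ : Measure M) : Set M :=
  {x | ∀ᵐ t ∂νinf, ∀ φ : C(M, ℝ),
    Tendsto (fun nn : ℕ => (nn : ℝ)⁻¹ * ∑ j ∈ Finset.range nn, φ (pIter f j x t))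
      atTop (𝓝 (∫ z, φ z ∂μ))}

/-- If the set `H_D(z)` of perturbations never sending `z` into the
s-invariant domain `D` has positive `ν^∞`-measure, then for `ν^∞`-a.e. `t ∈ H_D(z)`,
every `w ∈ ω(z,t)` is never sent into `D` by any perturbation. -/
theorem statement6
    (n : ℕ) (hn : 1 ≤ n) (a : EuclideanSpace ℝ (Fin n)) (ε : ℝ) (hε : 0 < ε)
    (a₀ : PSpace n a ε) (ha₀ : (a₀ : EuclideanSpace ℝ (Fin n)) = a)
    (ν : Measure (PSpace n a ε))
    (hν : ν = (volume (Metric.closedBall a ε))⁻¹ •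
      ((volume : Measure (EuclideanSpace ℝ (Fin n))).comap Subtype.val))
    (νinf : Measure (ℕ → PSpace n a ε)) (hprobν : IsProbabilityMeasure νinf)
    (hνinf : ∀ k : ℕ, νinf.map (fun t (i : Fin k) => t i) = Measure.pi fun _ => ν)
    (M : Type*) [MetricSpace M] [CompactSpace M] [MeasurableSpace M] [BorelSpace M]
    (m : Measure M) (hmprob : IsProbabilityMeasure m)
    (hmpos : ∀ O : Set M, IsOpen O → O.Nonempty → 0 < m O)
    (f : M → PSpace n a ε → M)
    (hfc : Continuous fun p : M × PSpace n a ε => f p.1 p.2)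
    (hfh : ∀ t : PSpace n a ε, IsHomeomorph fun z : M => f z t)
    (hfnull : ∀ (t : PSpace n a ε) (A : Set M), m A = 0 →
      m ((fun z => f z t) '' A) = 0 ∧ m ((fun z => f z t) ⁻¹' A) = 0)
    (D : SInvDomain f) (z : M)
    (hH : 0 < νinf {t | ∀ k : ℕ, 1 ≤ k → pIter f k z t ∉ D.carrier}) :
    ∀ᵐ t ∂νinf, (∀ k : ℕ, 1 ≤ k → pIter f k z t ∉ D.carrier) →
      ∀ w ∈ omegaPt f z t, ∀ k : ℕ, 1 ≤ k → ∀ s : ℕ → PSpace n a ε,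
        pIter f k w s ∉ D.carrier := by
  classical
  -- ν is a probability measure
  have hcb_meas : MeasurableSet (Metric.closedBall a ε) := measurableSet_closedBall
  have hemb : MeasurableEmbedding ((↑) : (PSpace n a ε) → EuclideanSpace ℝ (Fin n)) :=
    MeasurableEmbedding.subtype_coe hcb_meas
  have hcb_pos : 0 < volume (Metric.closedBall a ε) := by
    haveI : Nonempty (Fin n) := ⟨⟨0, hn⟩⟩
    exact Metric.measure_closedBall_pos _ _ hε
  have hcb_lt : volume (Metric.closedBall a ε) < ⊤ :=
    (isCompact_closedBall a ε).measure_lt_top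
  have hν_apply : ∀ O : Set (PSpace n a ε), MeasurableSet O →
      ν O = (volume (Metric.closedBall a ε))⁻¹ * volume ((↑) '' O : Set (EuclideanSpace ℝ (Fin n))) := by
    intro O hO
    rw [hν]
    simp only [Measure.smul_apply, smul_eq_mul]
    rw [hemb.comap_apply]
  haveI hPν : IsProbabilityMeasure ν := by
    constructor
    rw [hν_apply univ MeasurableSet.univ]
    rw [Set.image_univ, Subtype.range_coe]
    exact ENNReal.inv_mul_cancel hcb_pos.ne' hcb_lt.ne
  -- ν is positive on nonempty open sets
  have hνpos : ∀ O : Set (PSpace n a ε), IsOpen O → O.Nonempty → 0 < ν O := by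
    intro O hO ⟨x, hx⟩
    obtain ⟨O', hO', rfl⟩ := isOpen_induced_iff.mp hO
    rw [hν_apply _ (hO'.measurableSet.preimage measurable_subtype_coe)]
    refine ENNReal.mul_pos (by simp [hcb_lt.ne]) ?_
    have hone : Nonempty (Fin n) := ⟨⟨0, hn⟩⟩
    have hxcl : (x : EuclideanSpace ℝ (Fin n)) ∈ closure (Metric.ball a ε) := by
      rw [closure_ball a hε.ne']
      exact x.2
    have hne : (O' ∩ Metric.ball a ε).Nonempty :=
      (_root_.mem_closure_iff.mp hxcl) O' hO' hx
    have hsub : O' ∩ Metric.ball a ε ⊆ (↑) '' (((↑) : (PSpace n a ε) → _) ⁻¹' O') := by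
      rintro y ⟨hy1, hy2⟩
      exact ⟨⟨y, Metric.ball_subset_closedBall hy2⟩, hy1, rfl⟩
    have := (hO'.inter Metric.isOpen_ball).measure_pos volume hne
    exact (this.trans_le (measure_mono hsub)).ne'
  -- the carrier is open
  have hcar : IsOpen D.carrier := isOpen_iUnion fun i => D.isOpen i
  -- basic objects
  set Gs : M → Set (ℕ → (PSpace n a ε)) := fun x => {s' | ∃ k, 1 ≤ k ∧ pIter f k x s' ∈ D.carrier} with hGs
  set Qfull : Set (M × (ℕ → (PSpace n a ε))) := {p | ∃ k, 1 ≤ k ∧ pIter f k p.1 p.2 ∈ D.carrier} with hQfull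
  have hQfull_open : IsOpen Qfull := by
    have : Qfull = ⋃ k, ⋃ (_ : 1 ≤ k),
        (fun p : M × (ℕ → (PSpace n a ε)) => pIter f k p.1 p.2) ⁻¹' D.carrier := by
      ext p; simp [hQfull]
    rw [this]
    exact isOpen_iUnion fun k => isOpen_iUnion fun _ => hcar.preimage (continuous_pIter hfc k)
  have hQfull_meas : MeasurableSet Qfull := hQfull_open.measurableSet
  have hGs_eq : ∀ x, Gs x = Prod.mk x ⁻¹' Qfull := fun x => rfl
  set pE : M → ℝ≥0∞ := fun x => νinf (Gs x) with hpE
  have hpE_meas : Measurable pE := by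
    simp only [hpE, hGs_eq]
    exact measurable_measure_prodMk_left hQfull_meas
  have hpE_le : ∀ x, pE x ≤ 1 := fun x => prob_le_one
  -- the filtration of coordinate σ-algebras
  have hproj_meas : ∀ N : ℕ, Measurable (fun (t : ℕ → (PSpace n a ε)) (i : Fin N) => t i) :=
    fun N => measurable_projFin N
  set ℱseq : ℕ → MeasurableSpace (ℕ → (PSpace n a ε)) :=
    fun N => MeasurableSpace.comap (fun (t : ℕ → (PSpace n a ε)) (i : Fin N) => t i) inferInstance with hℱseq
  have hℱle : ∀ N, ℱseq N ≤ (inferInstance : MeasurableSpace (ℕ → (PSpace n a ε))) :=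
    fun N => measurable_iff_comap_le.mp (hproj_meas N)
  have hℱmono : Monotone ℱseq := by
    intro N N' hNN'
    have hcomp : (fun (t : ℕ → (PSpace n a ε)) (i : Fin N) => t i)
        = (fun (u : Fin N' → (PSpace n a ε)) (i : Fin N) => u (Fin.castLE hNN' i))
          ∘ (fun (t : ℕ → (PSpace n a ε)) (i : Fin N') => t i) := rfl
    rw [hℱseq]
    dsimp only
    rw [hcomp, ← MeasurableSpace.comap_comp]
    exact MeasurableSpace.comap_mono (measurable_iff_comap_le.mp
      (measurable_pi_lambda _ fun i => measurable_pi_apply _))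
  set ℱ : MeasureTheory.Filtration ℕ (inferInstance : MeasurableSpace (ℕ → (PSpace n a ε))) :=
    ⟨ℱseq, hℱmono, hℱle⟩ with hℱ
  have hℱsup : (⨆ N, ℱseq N) = (inferInstance : MeasurableSpace (ℕ → (PSpace n a ε))) := by
    refine le_antisymm (iSup_le hℱle) ?_
    refine iSup_le fun i => ?_
    have hcomp : (fun (t : ℕ → (PSpace n a ε)) => t i)
        = (fun (u : Fin (i + 1) → (PSpace n a ε)) => u ⟨i, Nat.lt_succ_self i⟩)
          ∘ (fun (t : ℕ → (PSpace n a ε)) (j : Fin (i + 1)) => t j) := rfl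
    calc MeasurableSpace.comap (fun (t : ℕ → (PSpace n a ε)) => t i) inferInstance
        ≤ ℱseq (i + 1) := by
          rw [hcomp, ← MeasurableSpace.comap_comp]
          exact MeasurableSpace.comap_mono
            (measurable_iff_comap_le.mp (measurable_pi_apply _))
      _ ≤ ⨆ N, ℱseq N := le_iSup _ _
  have a0 : (PSpace n a ε) := a₀
  -- finite-horizon iteration map
  set ξ : ∀ N : ℕ, (Fin N → (PSpace n a ε)) → M :=
    fun N u => pIter f N z (fun i => if h : i < N then u ⟨i, h⟩ else a0) with hξ
  have hξ_cont : ∀ N, Continuous (ξ N) := by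
    intro N
    have hext : Continuous fun (u : Fin N → (PSpace n a ε)) (i : ℕ) =>
        if h : i < N then u ⟨i, h⟩ else a0 := by
      refine continuous_pi fun i => ?_
      by_cases h : i < N
      · simp only [dif_pos h]; exact continuous_apply _
      · simp only [dif_neg h]; exact continuous_const
    exact (continuous_pIter hfc N).comp (continuous_const.prodMk hext)
  have hξ_eq : ∀ N (t : ℕ → (PSpace n a ε)), ξ N (fun i : Fin N => t i) = pIter f N z t := by
    intro N t
    refine pIter_congr f N z fun i hi => ?_
    simp [hi]
  -- the sets Q N
  set Q : ℕ → Set (ℕ → (PSpace n a ε)) := fun N =>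
    {t | ∃ k, 1 ≤ k ∧ pIter f k (pIter f N z t) (fun i => t (N + i)) ∈ D.carrier} with hQ
  have hQsubG : ∀ N, Q N ⊆ Gs z := by
    intro N t ⟨k, hk, hmem⟩
    rw [← pIter_add] at hmem
    exact ⟨N + k, by omega, hmem⟩
  set Q' : ∀ N : ℕ, Set ((Fin N → (PSpace n a ε)) × (ℕ → (PSpace n a ε))) :=
    fun N => {p | ∃ k, 1 ≤ k ∧ pIter f k (ξ N p.1) p.2 ∈ D.carrier} with hQ'
  have hQ'_open : ∀ N, IsOpen (Q' N) := by
    intro N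
    have : Q' N = ⋃ k, ⋃ (_ : 1 ≤ k),
        (fun p : (Fin N → (PSpace n a ε)) × (ℕ → (PSpace n a ε)) =>
          pIter f k (ξ N p.1) p.2) ⁻¹' D.carrier := by
      ext p; simp [hQ']
    rw [this]
    refine isOpen_iUnion fun k => isOpen_iUnion fun _ => hcar.preimage ?_
    exact (continuous_pIter hfc k).comp (((hξ_cont N).comp continuous_fst).prodMk continuous_snd)
  have hQ'_meas : ∀ N, MeasurableSet (Q' N) := fun N => (hQ'_open N).measurableSet
  have hQrep : ∀ N, Q N = (fun t : ℕ → (PSpace n a ε) =>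
      ((fun i : Fin N => t i, fun i => t (N + i)) :
        (Fin N → (PSpace n a ε)) × (ℕ → (PSpace n a ε)))) ⁻¹' Q' N := by
    intro N
    ext t
    simp only [hQ, hQ', mem_setOf_eq, mem_preimage, hξ_eq]
  have hQmeas : ∀ N, MeasurableSet (Q N) := by
    intro N
    rw [hQrep N]
    exact (hQ'_meas N).preimage (measurable_splitMap N)
  -- key identity
  have hkey : ∀ N : ℕ, ∀ A' : Set (Fin N → (PSpace n a ε)), MeasurableSet A' →
      νinf ((fun t (i : Fin N) => t i) ⁻¹' A' ∩ Q N)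
        = ∫⁻ t in (fun t (i : Fin N) => t i) ⁻¹' A', pE (ξ N (fun i : Fin N => t i)) ∂νinf := by
    intro N A' hA'
    have hpre : (fun t (i : Fin N) => t i) ⁻¹' A' ∩ Q N
        = (fun t : ℕ → (PSpace n a ε) =>
          ((fun i : Fin N => t i, fun i => t (N + i)) :
            (Fin N → (PSpace n a ε)) × (ℕ → (PSpace n a ε)))) ⁻¹' ((A' ×ˢ univ) ∩ Q' N) := by
      rw [hQrep N]
      ext t
      simp [mem_prod]
    rw [hpre, ← Measure.map_apply (measurable_splitMap N)
        (((hA'.prod MeasurableSet.univ)).inter (hQ'_meas N)),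
      split_law hνinf N, Measure.prod_apply (((hA'.prod MeasurableSet.univ)).inter (hQ'_meas N))]
    have hsec : (fun u => νinf (Prod.mk u ⁻¹' ((A' ×ˢ univ) ∩ Q' N)))
        = A'.indicator (fun u => pE (ξ N u)) := by
      funext u
      by_cases hu : u ∈ A'
      · rw [indicator_of_mem hu]
        congr 1
        ext s'
        simp [hQ', hGs, hu]
      · rw [indicator_of_notMem hu]
        have hempty : Prod.mk u ⁻¹' ((A' ×ˢ univ) ∩ Q' N) = ∅ := by
          ext s'; simp [hQ', hu]
        rw [hempty, measure_empty]
    rw [hsec, lintegral_indicator hA', ← hνinf N]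
    exact setLIntegral_map hA' (hpE_meas.comp (hξ_cont N).measurable) (hproj_meas N)
  -- the functions g N
  set g : ℕ → (ℕ → (PSpace n a ε)) → ℝ :=
    fun N t => (pE (ξ N (fun i : Fin N => t i))).toReal with hg
  have hg_meas : ∀ N, Measurable (g N) := fun N =>
    ((hpE_meas.comp (hξ_cont N).measurable).comp (hproj_meas N)).ennreal_toReal
  have hg_bdd : ∀ N t, ‖g N t‖ ≤ 1 := by
    intro N t
    rw [Real.norm_of_nonneg ENNReal.toReal_nonneg]
    simpa using ENNReal.toReal_mono ENNReal.one_ne_top (hpE_le _)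
  have hg_int : ∀ N, Integrable (g N) νinf :=
    fun N => (integrable_const (1 : ℝ)).mono' (hg_meas N).aestronglyMeasurable
      (ae_of_all _ (hg_bdd N))
  have hind_int : ∀ S : Set (ℕ → (PSpace n a ε)), MeasurableSet S →
      Integrable (S.indicator fun _ => (1 : ℝ)) νinf :=
    fun S hS => (integrable_const (1 : ℝ)).indicator hS
  have hGmeas : MeasurableSet (Gs z) := by
    rw [hGs_eq z]
    exact hQfull_meas.preimage measurable_prodMk_left
  -- conditional expectation identity
  have hcond_eq : ∀ N, g N =ᵐ[νinf] νinf[(Q N).indicator (fun _ => (1 : ℝ)) | ℱseq N] := by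
    intro N
    refine ae_eq_condExp_of_forall_setIntegral_eq (hℱle N)
      (hind_int _ (hQmeas N)) (fun s hs hμs => (hg_int N).integrableOn) ?_ ?_
    · intro s hs hμs
      obtain ⟨A', hA', rfl⟩ := hs
      have h1 : ∫ t in (fun t (i : Fin N) => t i) ⁻¹' A', g N t ∂νinf
          = (∫⁻ t in (fun t (i : Fin N) => t i) ⁻¹' A',
              pE (ξ N (fun i : Fin N => t i)) ∂νinf).toReal := by
        refine integral_toReal ?_ ?_
        · exact ((hpE_meas.comp (hξ_cont N).measurable).comp (hproj_meas N)).aemeasurable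
        · exact ae_of_all _ fun t => lt_of_le_of_lt (hpE_le _) ENNReal.one_lt_top
      have h2 : ∫ t in (fun t (i : Fin N) => t i) ⁻¹' A',
            (Q N).indicator (fun _ => (1 : ℝ)) t ∂νinf
          = (νinf ((fun t (i : Fin N) => t i) ⁻¹' A' ∩ Q N)).toReal := by
        rw [setIntegral_indicator (hQmeas N), setIntegral_const, smul_eq_mul, mul_one, Measure.real]
      rw [h1, h2, hkey N A' hA']
    · refine StronglyMeasurable.aestronglyMeasurable ?_
      refine Measurable.stronglyMeasurable ?_
      have hproj' : Measurable[ℱseq N] (fun t (i : Fin N) => t i) :=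
        measurable_iff_comap_le.mpr le_rfl
      exact ((hpE_meas.comp (hξ_cont N).measurable).comp hproj').ennreal_toReal
  -- monotonicity of conditional expectations
  have hcond_mono : ∀ N, νinf[(Q N).indicator (fun _ => (1 : ℝ)) | ℱseq N]
      ≤ᵐ[νinf] νinf[(Gs z).indicator (fun _ => (1 : ℝ)) | ℱseq N] := by
    intro N
    refine condExp_mono (hind_int _ (hQmeas N)) (hind_int _ hGmeas)
      (ae_of_all _ ?_)
    exact indicator_le_indicator_of_subset (hQsubG N) (fun _ => zero_le_one)
  -- Lévy upward convergence
  have hlevy : ∀ᵐ t ∂νinf, Tendsto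
      (fun N => (νinf[(Gs z).indicator (fun _ => (1 : ℝ)) | ℱseq N]) t) atTop
      (𝓝 ((Gs z).indicator (fun _ => (1 : ℝ)) t)) := by
    have hsm : StronglyMeasurable[⨆ N, ℱ N] ((Gs z).indicator fun _ => (1 : ℝ)) := by
      have : (⨆ N, ℱ N) = (inferInstance : MeasurableSpace (ℕ → (PSpace n a ε))) := hℱsup
      rw [this]
      exact stronglyMeasurable_const.indicator hGmeas
    exact Integrable.tendsto_ae_condExp (hind_int _ hGmeas) hsm
  -- combine the a.e. statements
  have hae : ∀ᵐ t ∂νinf, ∀ N, g N t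
      ≤ (νinf[(Gs z).indicator (fun _ => (1 : ℝ)) | ℱseq N]) t := by
    rw [ae_all_iff]
    intro N
    filter_upwards [hcond_eq N, hcond_mono N] with t h1 h2
    rw [h1]; exact h2
  filter_upwards [hae, hlevy] with t hle_t hlevy_t
  intro hHt w hw k hk s hks
  have htG : t ∉ Gs z := by rintro ⟨k', hk', hmem⟩; exact hHt k' hk' hmem
  have hzero : (Gs z).indicator (fun _ => (1 : ℝ)) t = 0 := indicator_of_notMem htG _
  rw [hzero] at hlevy_t
  have htend : Tendsto (fun N => g N t) atTop (𝓝 0) :=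
    squeeze_zero (fun N => ENNReal.toReal_nonneg) hle_t hlevy_t
  have hgt : ∀ N, g N t = (pE (pIter f N z t)).toReal := by
    intro N
    rw [hg]
    dsimp only
    rw [hξ_eq]
  -- neighbourhood data around (w, s)
  obtain ⟨i₀, hUi₀⟩ := mem_iUnion.mp hks
  have hWopen : IsOpen ((fun p : M × (ℕ → (PSpace n a ε)) => pIter f k p.1 p.2) ⁻¹' D.U i₀) :=
    (D.isOpen i₀).preimage (continuous_pIter hfc k)
  obtain ⟨V, O, hV, hO, hwV, hsO, hVO⟩ := isOpen_prod_iff.mp hWopen w s hUi₀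
  obtain ⟨I, u, hu, hIu⟩ := (isOpen_pi_iff.mp hO) s hsO
  set K : ℕ := I.sup id + 1 with hK
  set E : ℕ → Set (PSpace n a ε) := fun i => if i ∈ I then u i else univ with hE
  have hEmeas : ∀ i, MeasurableSet (E i) := by
    intro i
    rw [hE]
    dsimp only
    split_ifs with h
    · exact (hu i h).1.measurableSet
    · exact MeasurableSet.univ
  set β : ℝ≥0∞ := νinf {t' | ∀ i < K, t' i ∈ E i} with hβ
  have hmemK : ∀ i ∈ I, i < K := fun i hi => Nat.lt_succ_of_le (Finset.le_sup (f := id) hi)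
  have hβpos : 0 < β := by
    rw [hβ, meas_cyl ν νinf hνinf K E hEmeas]
    refine CanonicallyOrderedAdd.prod_pos.mpr fun i _ => ?_
    rw [hE]
    dsimp only
    split_ifs with h
    · exact hνpos (u i) (hu i h).1 ⟨s i, (hu i h).2⟩
    · simp
  have hcylsub : ∀ x ∈ V, {t' : ℕ → (PSpace n a ε) | ∀ i < K, t' i ∈ E i} ⊆ Gs x := by
    intro x hx t' ht'
    refine ⟨k, hk, ?_⟩
    have ht'pi : t' ∈ (I : Set ℕ).pi u := by
      intro i hi
      have hiF : i ∈ I := hi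
      have h2 := ht' i (hmemK i hiF)
      rw [hE] at h2
      dsimp only at h2
      rwa [if_pos hiF] at h2
    have : (x, t') ∈ (fun p : M × (ℕ → (PSpace n a ε)) => pIter f k p.1 p.2) ⁻¹' D.U i₀ :=
      hVO ⟨hx, hIu ht'pi⟩
    exact mem_iUnion.mpr ⟨i₀, this⟩
  have hlow : ∀ x ∈ V, β ≤ pE x := fun x hx => measure_mono (hcylsub x hx)
  obtain ⟨nseq, hsm, hconv⟩ := hw
  have htend2 : Tendsto (fun j => (pE (pIter f (nseq j) z t)).toReal) atTop (𝓝 0) := by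
    have h := htend.comp hsm.tendsto_atTop
    have heq : (fun j => g (nseq j) t) = fun j => (pE (pIter f (nseq j) z t)).toReal := by
      funext j; exact hgt (nseq j)
    rwa [show ((fun N => g N t) ∘ nseq) = fun j => g (nseq j) t from rfl, heq] at h
  have hβR : 0 < β.toReal := ENNReal.toReal_pos hβpos.ne' (measure_ne_top _ _)
  have hev1 : ∀ᶠ j in atTop, pIter f (nseq j) z t ∈ V :=
    hconv.eventually_mem (hV.mem_nhds hwV)
  have hev2 : ∀ᶠ j in atTop, (pE (pIter f (nseq j) z t)).toReal < β.toReal :=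
    htend2.eventually (gt_mem_nhds hβR)
  obtain ⟨j, hj1, hj2⟩ := (hev1.and hev2).exists
  have hge : β.toReal ≤ (pE (pIter f (nseq j) z t)).toReal :=
    ENNReal.toReal_mono (measure_ne_top _ _) (hlow _ hj1)
  linarith

end
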